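/- arXiv:0901.3749 — 2 statements merged into one kernel-verified Lean document; each statement's English description precedes it below -/
import Mathlib

section
/- Let p : Σ* → ℝ be a USSF with dim p ≤ 2. Then p is associated with an unconstrained hidden Markov process on some finite number of hidden states. -/
open Matrix

/-- The column `p^w` of the Hankel matrix of `p`, as a function `v ↦ p(wv)`. -/
def hankelCol {A : Type*} (p : List A → ℝ) (w : List A) : List A → ℝ :=
  fun v => p (w ++ v)

/-- The dimension of a string function: the rank of its Hankel matrix. -/
noncomputable def sfDim {A : Type*} (p : List A → ℝ) : Cardinal :=
  Module.rank ℝ ↥(Submodule.span ℝ (Set.range (hankelCol p)))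

/-- For `v = a₁…aₙ`, the product `T_{aₙ} ⋯ T_{a₁}`. -/
def wordProd {A R : Type*} [Semiring R] {d : ℕ}
    (T : A → Matrix (Fin d) (Fin d) R) (v : List A) : Matrix (Fin d) (Fin d) R :=
  (v.reverse.map T).prod

/-- `p` is associated with an unconstrained hidden Markov process on `l` hidden states. -/
def IsHMM {A : Type*} [Fintype A] (l : ℕ) (p : List A → ℝ) : Prop :=
  ∃ (Am : Matrix (Fin l) (Fin l) ℝ) (E : Fin l → A → ℝ) (π : Fin l → ℝ),
    (∀ i j, 0 ≤ Am i j) ∧ (∀ i, ∑ j, Am i j = 1) ∧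
    (∀ i a, 0 ≤ E i a) ∧ (∀ i, ∑ a : A, E i a = 1) ∧ (∀ i, 0 ≤ π i) ∧
    ∀ v : List A,
      p v = (fun _ => (1 : ℝ)) ⬝ᵥ
        (wordProd (fun a => Amᵀ * Matrix.diagonal fun i => E i a) v) *ᵥ π

/-!
The span `V` of the Hankel columns of `p` is invariant under the letter shifts
`f ↦ f (a :: ·)`, and a nonnegative element of `V` vanishing at `[]` vanishes identically, since
it satisfies the same sum rule as `p`. So when `dim V ≤ 2` the cone of nonnegative elements of
`V` is generated by two functions `G₀, G₁` with `G i [] = 1`: the end points of the segment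
`{f ∈ V | 0 ≤ f, f [] = 1}`. Expanding `p` and the shifts of `G₀, G₁` in these generators gives
a nonnegative quasi-realization `p v = 𝟙ᵀ T_{aₙ} ⋯ T_{a₁} π` with `∑ₐ ∑ᵢ (T a) i j = 1`. The
HMM on the states `(i, b) ∈ Fin d × Σ` that emits `b` and then moves to `(j, c)` with
probability `(T c) j i` realizes it.
-/

section ConeGenerators

variable {X : Type*}

lemma exists_eq_smul_add_smul_of_rank_le_two {V : Submodule ℝ (X → ℝ)}
    (hV : Module.rank ℝ V ≤ 2) {x₀ : X} {q u f : X → ℝ} (hq : q ∈ V) (hq₀ : q x₀ = 1)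
    (hu : u ∈ V) (hu₀ : u x₀ = 0) (hu_ne : u ≠ 0) (hf : f ∈ V) :
    ∃ b : ℝ, f = f x₀ • q + b • u := by
  have hqu : LinearIndependent ℝ ![q, u] :=
    linearIndependent_fin2.2 ⟨hu_ne, fun a h => by simpa [hu₀, hq₀] using congrFun h x₀⟩
  have hf' : f ∈ Submodule.span ℝ (Set.range ![q, u]) := by
    by_contra hf'
    have hfqu : LinearIndependent ℝ ![f, q, u] := linearIndependent_finCons.2 ⟨hqu, hf'⟩
    have hle : Submodule.span ℝ (Set.range ![f, q, u]) ≤ V :=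
      Submodule.span_le.2 <| Set.range_subset_iff.2 fun i => by fin_cases i <;> assumption
    have h32 := (rank_span hfqu).symm.trans_le ((Submodule.rank_mono hle).trans hV)
    have h32' := Cardinal.lift_le.{0}.2 h32
    rw [Cardinal.mk_range_eq_of_injective hfqu.injective] at h32'
    norm_num at h32'
  obtain ⟨c, rfl⟩ := (Submodule.mem_span_range_iff_exists_fun ℝ).1 hf'
  exact ⟨c 1, by simp [Fin.sum_univ_two, hq₀, hu₀]⟩

lemma exists_bounds_of_nonneg_add_smul {q u : X → ℝ} (hq : 0 ≤ q) {xn xp : X}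
    (hxn : u xn < 0) (hxp : 0 < u xp) :
    ∃ t₁ t₂ : ℝ, 0 ≤ q + t₁ • u ∧ 0 ≤ q + t₂ • u ∧
      ∀ t : ℝ, 0 ≤ q + t • u → t₁ ≤ t ∧ t ≤ t₂ := by
  set K := {t : ℝ | 0 ≤ q + t • u}
  have hK : IsClosed K := isClosed_le continuous_const (by fun_prop)
  have hK₀ : K.Nonempty := ⟨0, by simpa [K] using hq⟩
  have hKabove : BddAbove K := ⟨q xn / -u xn, fun t ht => by
    have := ht xn
    simp only [Pi.zero_apply, Pi.add_apply, Pi.smul_apply, smul_eq_mul] at this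
    rw [le_div_iff₀ (by linarith)]
    linarith⟩
  have hKbelow : BddBelow K := ⟨-(q xp / u xp), fun t ht => by
    have := ht xp
    simp only [Pi.zero_apply, Pi.add_apply, Pi.smul_apply, smul_eq_mul] at this
    rw [neg_le, le_div_iff₀ hxp]
    linarith⟩
  exact ⟨sInf K, sSup K, hK.csInf_mem hK₀ hKbelow, hK.csSup_mem hK₀ hKabove,
    fun t ht => ⟨csInf_le hKbelow ht, le_csSup hKabove ht⟩⟩

lemma exists_two_generators_of_rank_le_two {V : Submodule ℝ (X → ℝ)}
    (hV : Module.rank ℝ V ≤ 2) {x₀ : X} (hpointed : ∀ f ∈ V, 0 ≤ f → f x₀ = 0 → f = 0)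
    {q : X → ℝ} (hq : q ∈ V) (hq_nonneg : 0 ≤ q) (hq₀ : q x₀ = 1) :
    ∃ G : Fin 2 → X → ℝ, (∀ i, G i ∈ V) ∧ (∀ i, 0 ≤ G i) ∧ (∀ i, G i x₀ = 1) ∧
      ∀ f ∈ V, 0 ≤ f → ∃ c : Fin 2 → ℝ, 0 ≤ c ∧ f = ∑ i, c i • G i := by
  by_cases hu : ∃ u ∈ V, u x₀ = 0 ∧ u ≠ 0
  · obtain ⟨u, huV, hu₀, hu_ne⟩ := hu
    have hsign : ∀ w ∈ V, w x₀ = 0 → w ≠ 0 → ∃ x, w x < 0 := fun w hw hw₀ hw_ne => by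
      by_contra! h
      exact hw_ne (hpointed w hw h hw₀)
    obtain ⟨xn, hxn⟩ := hsign u huV hu₀ hu_ne
    obtain ⟨xp, hxp⟩ := hsign (-u) (neg_mem huV) (by simp [hu₀]) (neg_ne_zero.2 hu_ne)
    obtain ⟨t₁, t₂, ht₁, ht₂, hK⟩ :=
      exists_bounds_of_nonneg_add_smul hq_nonneg hxn (neg_lt_zero.1 hxp)
    refine ⟨![q + t₁ • u, q + t₂ • u], ?_, ?_, ?_, ?_⟩
    · simp only [Fin.forall_fin_two]
      exact ⟨add_mem hq (V.smul_mem _ huV), add_mem hq (V.smul_mem _ huV)⟩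
    · simpa [Fin.forall_fin_two] using ⟨ht₁, ht₂⟩
    · simp [Fin.forall_fin_two, hq₀, hu₀]
    intro f hf hf_nonneg
    rcases (show (0 : ℝ) ≤ f x₀ from hf_nonneg x₀).eq_or_lt with hf₀ | hf₀
    · exact ⟨0, le_rfl, by simp [hpointed f hf hf_nonneg hf₀.symm]⟩
    obtain ⟨b, hb⟩ := exists_eq_smul_add_smul_of_rank_le_two hV hq hq₀ huV hu₀ hu_ne hf
    set c := f x₀
    have ht : 0 ≤ q + (b / c) • u := by
      have : q + (b / c) • u = c⁻¹ • f := by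
        rw [hb, smul_add, smul_smul, smul_smul, inv_mul_cancel₀ hf₀.ne', one_smul,
          div_eq_inv_mul]
      rw [this]
      exact smul_nonneg (inv_nonneg.2 hf₀.le) hf_nonneg
    obtain ⟨α, β, hα, hβ, hαβ, hαβt⟩ : b / c ∈ segment ℝ t₁ t₂ := by
      rw [segment_eq_Icc ((hK _ ht).1.trans (hK _ ht).2)]
      exact hK _ ht
    have hb' : c * (α * t₁ + β * t₂) = b := by
      rw [← smul_eq_mul α, ← smul_eq_mul β, hαβt]
      field_simp
    refine ⟨![c * α, c * β], ?_, ?_⟩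
    · simpa [Pi.le_def, Fin.forall_fin_two] using ⟨by positivity, by positivity⟩
    · rw [hb]
      ext x
      simp only [Fin.sum_univ_two, Matrix.cons_val_zero, Matrix.cons_val_one, Pi.add_apply,
        Pi.smul_apply, smul_eq_mul]
      linear_combination -(c * q x) * hαβ - u x * hb'
  · push Not at hu
    refine ⟨![q, q], by simp [Fin.forall_fin_two, hq], by simp [Fin.forall_fin_two, hq_nonneg],
      by simp [Fin.forall_fin_two, hq₀], fun f hf hf_nonneg => ⟨![f x₀, 0], ?_, ?_⟩⟩
    · simpa [Pi.le_def, Fin.forall_fin_two] using hf_nonneg x₀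
    · have := hu (f - f x₀ • q) (sub_mem hf (V.smul_mem _ hq)) (by simp [hq₀])
      simpa [Fin.sum_univ_two, sub_eq_zero] using this

end ConeGenerators

section Hankel

variable {A : Type*} {p : List A → ℝ}

def hankelSpan (p : List A → ℝ) : Submodule ℝ (List A → ℝ) :=
  Submodule.span ℝ (Set.range (hankelCol p))

lemma self_mem_hankelSpan : p ∈ hankelSpan p :=
  Submodule.subset_span ⟨[], rfl⟩

lemma cons_mem_hankelSpan (a : A) {f : List A → ℝ} (hf : f ∈ hankelSpan p) :
    (fun v => f (a :: v)) ∈ hankelSpan p := by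
  have : hankelSpan p ≤ (hankelSpan p).comap (LinearMap.funLeft ℝ ℝ (List.cons a)) :=
    Submodule.span_le.2 <| Set.range_subset_iff.2 fun w =>
      Submodule.subset_span ⟨w ++ [a], by ext v; simp [hankelCol, LinearMap.funLeft_apply]⟩
  exact this hf

variable [Fintype A]

lemma sum_append_singleton_of_mem_hankelSpan (hsum : ∀ v, ∑ a : A, p (v ++ [a]) = p v)
    {f : List A → ℝ} (hf : f ∈ hankelSpan p) (v : List A) :
    ∑ a : A, f (v ++ [a]) = f v := by
  induction hf using Submodule.span_induction generalizing v with
  | mem g hg =>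
    obtain ⟨w, rfl⟩ := hg
    simpa only [hankelCol, List.append_assoc] using hsum (w ++ v)
  | zero => simp
  | add g h _ _ hg hh => simp only [Pi.add_apply, Finset.sum_add_distrib, hg, hh]
  | smul r g _ hg => simp only [Pi.smul_apply, smul_eq_mul, ← Finset.mul_sum, hg]

lemma eq_zero_of_nonneg_of_sum_append_singleton {f : List A → ℝ} (hf : 0 ≤ f)
    (hsum : ∀ v, ∑ a : A, f (v ++ [a]) = f v) (h₀ : f [] = 0) : f = 0 := by
  ext v
  induction v using List.reverseRecOn with
  | nil => exact h₀
  | append_singleton v a ih =>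
    rw [← hsum v] at ih
    exact (Finset.sum_eq_zero_iff_of_nonneg fun b _ => hf (v ++ [b])).1 ih a (Finset.mem_univ a)

end Hankel

section Realization

variable {A : Type*}

@[simp]
lemma wordProd_nil {R : Type*} [Semiring R] {d : ℕ} (T : A → Matrix (Fin d) (Fin d) R) :
    wordProd T [] = 1 := rfl

lemma wordProd_cons {R : Type*} [Semiring R] {d : ℕ} (T : A → Matrix (Fin d) (Fin d) R)
    (a : A) (v : List A) : wordProd T (a :: v) = wordProd T v * T a := by
  simp [wordProd]

lemma wordProd_append_singleton {R : Type*} [Semiring R] {d : ℕ}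
    (T : A → Matrix (Fin d) (Fin d) R) (v : List A) (a : A) :
    wordProd T (v ++ [a]) = T a * wordProd T v := by
  simp [wordProd]

lemma wordProd_mul_eq_mul_wordProd {R : Type*} [Semiring R] {m n : ℕ}
    {S : A → Matrix (Fin m) (Fin m) R} {T : A → Matrix (Fin n) (Fin n) R}
    {L : Matrix (Fin m) (Fin n) R} (h : ∀ a, S a * L = L * T a) (v : List A) :
    wordProd S v * L = L * wordProd T v := by
  induction v with
  | nil => simp
  | cons a v ih =>
    rw [wordProd_cons, wordProd_cons, Matrix.mul_assoc, h, ← Matrix.mul_assoc, ih,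
      Matrix.mul_assoc]

lemma apply_eq_one_dotProduct_wordProd_mulVec {p : List A → ℝ} {d : ℕ}
    (G : Fin d → List A → ℝ) (T : A → Matrix (Fin d) (Fin d) ℝ) (π : Fin d → ℝ)
    (hG₀ : ∀ i, G i [] = 1) (hshift : ∀ a j, (fun v => G j (a :: v)) = ∑ i, T a i j • G i)
    (hp : p = ∑ i, π i • G i) (v : List A) :
    p v = (fun _ => 1) ⬝ᵥ wordProd T v *ᵥ π := by
  have key : ∀ v y, p (v ++ y) = ∑ i, (wordProd T v *ᵥ π) i * G i y := by
    intro v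
    induction v using List.reverseRecOn with
    | nil => simp [hp, Finset.sum_apply]
    | append_singleton v a ih =>
      intro y
      have hshift' : ∀ j, G j (a :: y) = ∑ i, T a i j * G i y := fun j => by
        simpa [Finset.sum_apply] using congrFun (hshift a j) y
      rw [List.append_assoc, List.singleton_append, ih, wordProd_append_singleton,
        ← mulVec_mulVec]
      generalize wordProd T v *ᵥ π = c
      simp only [hshift', mulVec, dotProduct, Finset.mul_sum, Finset.sum_mul]
      rw [Finset.sum_comm]
      exact Finset.sum_congr rfl fun i _ => Finset.sum_congr rfl fun j _ => by ring
  simpa [hG₀, dotProduct, mul_comm] using key v []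

end Realization

noncomputable section HMM

variable {A : Type*} [Fintype A] {d : ℕ}

/-- Hidden state `(i, b)`: the quasi-state is `i` and the letter `b` is emitted next. -/
def hmmState (d : ℕ) (A : Type*) [Fintype A] : Fin (Fintype.card (Fin d × A)) ≃ Fin d × A :=
  (Fintype.equivFin _).symm

def stackMatrix (T : A → Matrix (Fin d) (Fin d) ℝ) :
    Matrix (Fin (Fintype.card (Fin d × A))) (Fin d) ℝ :=
  of fun x j => T (hmmState d A x).2 (hmmState d A x).1 j

def hmmTransition (T : A → Matrix (Fin d) (Fin d) ℝ) :
    Matrix (Fin (Fintype.card (Fin d × A))) (Fin (Fintype.card (Fin d × A))) ℝ :=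
  of fun x y => stackMatrix T y (hmmState d A x).1

def hmmEmission [DecidableEq A] (x : Fin (Fintype.card (Fin d × A))) (a : A) : ℝ :=
  if (hmmState d A x).2 = a then 1 else 0

variable (T : A → Matrix (Fin d) (Fin d) ℝ)

lemma sum_stackMatrix_apply (hcol : ∀ j, ∑ a, ∑ i, T a i j = 1) (j : Fin d) :
    ∑ x, stackMatrix T x j = 1 := by
  simp only [stackMatrix, of_apply]
  rw [(hmmState d A).sum_comp fun z => T z.2 z.1 j, Fintype.sum_prod_type, Finset.sum_comm]
  exact hcol j

lemma transpose_hmmTransition_mul_diagonal_mul_stackMatrix [DecidableEq A] (a : A) :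
    (hmmTransition T)ᵀ * diagonal (fun x => hmmEmission x a) * stackMatrix T =
      stackMatrix T * T a := by
  ext y j
  simp only [mul_apply, transpose_apply, diagonal_apply, mul_ite, mul_zero,
    Finset.sum_ite_eq', Finset.mem_univ, if_true]
  calc _ = ∑ z : Fin d × A, stackMatrix T y z.1 * (if z.2 = a then 1 else 0) * T z.2 z.1 j :=
        Fintype.sum_equiv (hmmState d A) _ _ fun x => rfl
    _ = _ := by simp [Fintype.sum_prod_type]

theorem isHMM_of_nonneg_realization [DecidableEq A] {p : List A → ℝ} (π : Fin d → ℝ)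
    (hT : ∀ a i j, 0 ≤ T a i j) (hπ : 0 ≤ π) (hcol : ∀ j, ∑ a, ∑ i, T a i j = 1)
    (hp : ∀ v, p v = (fun _ => 1) ⬝ᵥ wordProd T v *ᵥ π) :
    IsHMM (Fintype.card (Fin d × A)) p := by
  refine ⟨hmmTransition T, hmmEmission, stackMatrix T *ᵥ π, fun _ _ => hT _ _ _,
    fun x => sum_stackMatrix_apply T hcol _, fun x a => ?_, fun x => by simp [hmmEmission],
    fun x => dotProduct_nonneg_of_nonneg (fun _ => hT _ _ _) hπ, fun v => ?_⟩
  · unfold hmmEmission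
    split_ifs <;> norm_num
  have hone : (fun _ => 1) ᵥ* stackMatrix T = fun _ => 1 := by
    ext j
    simpa [vecMul, dotProduct] using sum_stackMatrix_apply T hcol j
  rw [mulVec_mulVec,
    wordProd_mul_eq_mul_wordProd (transpose_hmmTransition_mul_diagonal_mul_stackMatrix T),
    ← mulVec_mulVec, dotProduct_mulVec, hone, hp]

theorem isHMM_of_nonneg_generators [DecidableEq A] {p : List A → ℝ} (G : Fin d → List A → ℝ)
    (π : Fin d → ℝ) (hT : ∀ a i j, 0 ≤ T a i j) (hπ : 0 ≤ π) (hG₀ : ∀ i, G i [] = 1)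
    (hGsum : ∀ i, ∑ a, G i [a] = 1)
    (hshift : ∀ a j, (fun v => G j (a :: v)) = ∑ i, T a i j • G i)
    (hp : p = ∑ i, π i • G i) :
    IsHMM (Fintype.card (Fin d × A)) p := by
  refine isHMM_of_nonneg_realization T π hT hπ (fun j => ?_)
    (apply_eq_one_dotProduct_wordProd_mulVec G T π hG₀ hshift hp)
  rw [← hGsum j]
  refine Finset.sum_congr rfl fun a _ => ?_
  simp [congrFun (hshift a j) [], Finset.sum_apply, hG₀]

end HMM

lemma isHMM_zero {A : Type*} [Fintype A] : IsHMM 0 (fun _ : List A => (0 : ℝ)) :=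
  ⟨0, 0, 0, by simp⟩

theorem stmt12_general {A : Type*} [Fintype A] (p : List A → ℝ)
    (hpos : ∀ v : List A, 0 ≤ p v)
    (hsum : ∀ v : List A, ∑ a : A, p (v ++ [a]) = p v)
    (hdim : sfDim p ≤ 2) :
    ∃ l : ℕ, IsHMM l p := by
  classical
  have hpointed : ∀ f ∈ hankelSpan p, 0 ≤ f → f [] = 0 → f = 0 := fun f hf hf_nonneg hf₀ =>
    eq_zero_of_nonneg_of_sum_append_singleton hf_nonneg
      (sum_append_singleton_of_mem_hankelSpan hsum hf) hf₀
  rcases (hpos []).eq_or_lt with hp₀ | hp₀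
  · exact ⟨0, (hpointed p self_mem_hankelSpan hpos hp₀.symm).symm ▸ isHMM_zero⟩
  obtain ⟨G, hGV, hG_nonneg, hG₀, hcone⟩ := exists_two_generators_of_rank_le_two hdim hpointed
    (Submodule.smul_mem _ (p [])⁻¹ self_mem_hankelSpan) (smul_nonneg (inv_nonneg.2 hp₀.le) hpos)
    (inv_mul_cancel₀ hp₀.ne')
  choose c hc_nonneg hc using fun a j =>
    hcone _ (cons_mem_hankelSpan a (hGV j)) fun v => hG_nonneg j (a :: v)
  obtain ⟨π, hπ, hpG⟩ := hcone p self_mem_hankelSpan hpos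
  exact ⟨_, isHMM_of_nonneg_generators (fun a => of fun i j => c a j i) G π
    (fun a i j => hc_nonneg a j i) hπ hG₀
    (fun j => by simpa [hG₀] using sum_append_singleton_of_mem_hankelSpan hsum (hGV j) []) hc hpG⟩

/-- Every USSF of dimension at most `2` is associated with an
unconstrained hidden Markov process on some finite number of hidden states. -/
theorem stmt12 {A : Type*} [Fintype A] [Nonempty A] (p : List A → ℝ)
    (hpos : ∀ v : List A, 0 ≤ p v)
    (hsum : ∀ v : List A, ∑ a : A, p (v ++ [a]) = p v)
    (hdim : sfDim p ≤ 2) :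
    ∃ l : ℕ, IsHMM l p :=
  stmt12_general p hpos hsum hdim
end

section
/- Let p : Σ* → ℝ be a string function with dim p = d < ∞, and suppose x, y ∈ ℝ^d and matrices T_a ∈ ℝ^{d×d} (a ∈ Σ) satisfy p(v = a_1…a_n) = yᵀ T_{a_n}···T_{a_1} x for all v ∈ Σ*. Then span{T_w x : w ∈ Σ*} = ℝ^d, where T_w := T_{b_m}···T_{b_1} for w = b_1…b_m and T_□ := Id. -/
/-
The columns of the Hankel matrix factor through the states of the automaton:
`p^w(v) = yᵀ T_v (T_w x)`, so `p^w` is the image of the reachable state `T_w x` under the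
linear observation map `z ↦ (v ↦ yᵀ T_v z)`. Hence `d = dim p` is at most the dimension of the
reachable subspace of `ℝ^d`, which therefore is all of `ℝ^d`.
-/

open Matrix

open Submodule

lemma Submodule.eq_top_of_rank_le {K V : Type*} [DivisionRing K] [AddCommGroup V] [Module K V]
    [FiniteDimensional K V] {S : Submodule K V} (h : Module.rank K V ≤ Module.rank K S) :
    S = ⊤ :=
  eq_top_of_finrank_eq <| S.finrank_le.antisymm <|
    Module.finrank_le_finrank_of_rank_le_rank (by simpa using h) (Module.rank_lt_aleph0 K S)

section Automaton

variable {A R : Type*} {d : ℕ} (T : A → Matrix (Fin d) (Fin d) R)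

lemma wordProd_append [Semiring R] (w v : List A) :
    wordProd T (w ++ v) = wordProd T v * wordProd T w := by
  simp [wordProd, List.reverse_append]

variable [CommSemiring R]

def observe (y : Fin d → R) : (Fin d → R) →ₗ[R] (List A → R) where
  toFun z v := y ⬝ᵥ wordProd T v *ᵥ z
  map_add' z z' := by funext v; simp [mulVec_add, dotProduct_add]
  map_smul' c z := by funext v; simp [mulVec_smul, dotProduct_smul]

def reachable (x : Fin d → R) : Submodule R (Fin d → R) :=
  span R (Set.range fun w : List A => wordProd T w *ᵥ x)

lemma observe_wordProd_mulVec (x y : Fin d → R) (w : List A) :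
    observe T y (wordProd T w *ᵥ x) = fun v => y ⬝ᵥ wordProd T (w ++ v) *ᵥ x := by
  funext v
  simp [observe, wordProd_append, mulVec_mulVec]

end Automaton

section Hankel

variable {A : Type*} {d : ℕ} {p : List A → ℝ} {x y : Fin d → ℝ}
  {T : A → Matrix (Fin d) (Fin d) ℝ}

lemma span_range_hankelCol_eq_map_reachable (h : ∀ v, p v = y ⬝ᵥ wordProd T v *ᵥ x) :
    span ℝ (Set.range (hankelCol p)) = (reachable T x).map (observe T y) := by
  have hcol : hankelCol p = fun w => observe T y (wordProd T w *ᵥ x) := by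
    funext w
    rw [observe_wordProd_mulVec]
    funext v
    exact h (w ++ v)
  rw [reachable, map_span, hcol, ← Set.range_comp]
  rfl

lemma sfDim_le_lift_rank_reachable (h : ∀ v, p v = y ⬝ᵥ wordProd T v *ᵥ x) :
    sfDim p ≤ Cardinal.lift (Module.rank ℝ (reachable T x)) := by
  rw [sfDim, span_range_hankelCol_eq_map_reachable h]
  simpa using lift_rank_map_le (observe T y) (reachable T x)

end Hankel

theorem stmt18_general {A : Type*} (p : List A → ℝ) (d : ℕ)
    (hdim : sfDim p = (d : Cardinal))
    (x y : Fin d → ℝ) (T : A → Matrix (Fin d) (Fin d) ℝ)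
    (h : ∀ v : List A, p v = y ⬝ᵥ (wordProd T v) *ᵥ x) :
    Submodule.span ℝ (Set.range fun w : List A => (wordProd T w) *ᵥ x) = ⊤ := by
  have hle : (d : Cardinal) ≤ Cardinal.lift (Module.rank ℝ (reachable T x)) :=
    hdim ▸ sfDim_le_lift_rank_reachable h
  exact Submodule.eq_top_of_rank_le (S := reachable T x) (by simpa using hle)

/-- If `dim p = d` and `p(a₁…aₙ) = yᵀ T_{aₙ} ⋯ T_{a₁} x` for all
strings, then `span{T_w x : w ∈ Σ*} = ℝ^d`. -/
theorem stmt18 {A : Type*} [Fintype A] [Nonempty A] (p : List A → ℝ) (d : ℕ)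
    (hdim : sfDim p = (d : Cardinal))
    (x y : Fin d → ℝ) (T : A → Matrix (Fin d) (Fin d) ℝ)
    (h : ∀ v : List A, p v = y ⬝ᵥ (wordProd T v) *ᵥ x) :
    Submodule.span ℝ (Set.range fun w : List A => (wordProd T w) *ᵥ x) = ⊤ :=
  stmt18_general p d hdim x y T h
end
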